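/- Let A be a real symmetric n×n matrix and let 0 ≤ k ≤ n. Then (−1)^k times the coefficient of x^{n−k} in the characteristic polynomial det(x·I − A²) of A² equals Σ_{(I,J)} det(A_{I,J})², the sum running over all pairs (I,J) of k-element subsets of {1,…,n}; when k = 0 both sides equal 1. -/

import Mathlib

open Matrix

/-- The minor of a real `n × n` matrix `A` given by `k`-element sets `I` of row indices and
`J` of column indices. For `k = 0` it equals `1`. -/
def Matrix.minorOn {n k : ℕ} (A : Matrix (Fin n) (Fin n) ℝ)
    (I : {s : Finset (Fin n) // s.card = k}) (J : {s : Finset (Fin n) // s.card = k}) : ℝ :=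
  (A.submatrix (I.1.orderEmbOfFin I.2) (J.1.orderEmbOfFin J.2)).det

/-!
The `k × k` minors of a matrix `A` are the entries of its `k`-th compound matrix `C_k(A)`, which
is the matrix of `⋀^k A` in the basis of wedge products of basis vectors; functoriality of `⋀^k`
gives Cauchy–Binet, `C_k(AB) = C_k(A) C_k(B)`. The coefficient `(-1)^k c_{n-k}` of a
characteristic polynomial is the sum of the principal `k × k` minors, i.e. `tr C_k(M)`. For
`M = A² = A Aᵀ` this is `tr (C_k(A) C_k(A)ᵀ)`, the sum of the squares of all `k × k` minors.
-/

namespace Matrix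

variable {R : Type*} [CommRing R] {l m n : Type*} [LinearOrder l] [LinearOrder m] [LinearOrder n]

noncomputable def compound (k : ℕ) (M : Matrix m n R) :
    Matrix (Set.powersetCard m k) (Set.powersetCard n k) R :=
  of fun I J => (M.submatrix (I.1.orderEmbOfFin I.2) (J.1.orderEmbOfFin J.2)).det

lemma compound_apply (k : ℕ) (M : Matrix m n R) (I : Set.powersetCard m k)
    (J : Set.powersetCard n k) :
    compound k M I J = (M.submatrix (I.1.orderEmbOfFin I.2) (J.1.orderEmbOfFin J.2)).det :=
  rfl

lemma compound_transpose (k : ℕ) (M : Matrix m n R) : compound k Mᵀ = (compound k M)ᵀ := by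
  ext I J
  rw [transpose_apply, compound_apply, compound_apply, ← transpose_submatrix, det_transpose]

lemma det_submatrix_orderEmbOfFin (M : Matrix m m R) (s : Finset m) {k : ℕ} (h : s.card = k) :
    (M.submatrix (s.orderEmbOfFin h) (s.orderEmbOfFin h)).det =
      (M.submatrix (Subtype.val : s → m) Subtype.val).det :=
  det_submatrix_equiv_self (s.orderIsoOfFin h).toEquiv (M.submatrix Subtype.val Subtype.val)

variable [Fintype l] [Fintype m] [Fintype n]

theorem _root_.LinearMap.toMatrix_exteriorPower_map {M N : Type*} [AddCommGroup M] [Module R M]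
    [AddCommGroup N] [Module R N] (b : Module.Basis n R M) (c : Module.Basis m R N)
    (f : M →ₗ[R] N) (k : ℕ) :
    LinearMap.toMatrix (b.exteriorPower k) (c.exteriorPower k) (exteriorPower.map k f) =
      compound k (LinearMap.toMatrix b c f) := by
  ext I J
  rw [LinearMap.toMatrix_apply, ← Module.Basis.coord_apply, exteriorPower.basis_coord,
    exteriorPower.basis_apply, exteriorPower.ιMulti_family, exteriorPower.map_apply_ιMulti,
    exteriorPower.ιMultiDual_apply_ιMulti, compound_apply, ← det_transpose]
  congr 1
  ext i j
  simp [LinearMap.toMatrix_apply, Set.powersetCard.ofFinEmbEquiv_symm_apply]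

theorem compound_mul (k : ℕ) (M : Matrix l m R) (N : Matrix m n R) :
    compound k (M * N) = compound k M * compound k N := by
  let bl := Pi.basisFun R l
  let bm := Pi.basisFun R m
  let bn := Pi.basisFun R n
  calc compound k (M * N)
      = compound k (LinearMap.toMatrix bn bl (toLin bm bl M ∘ₗ toLin bn bm N)) := by
        rw [← toLin_mul, LinearMap.toMatrix_toLin]
    _ = compound k M * compound k N := by
        rw [← LinearMap.toMatrix_exteriorPower_map, exteriorPower.map_comp,
          LinearMap.toMatrix_comp _ (bm.exteriorPower k), LinearMap.toMatrix_exteriorPower_map,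
          LinearMap.toMatrix_exteriorPower_map, LinearMap.toMatrix_toLin, LinearMap.toMatrix_toLin]

theorem charpoly_coeff_eq_trace_compound (M : Matrix n n R) {k : ℕ} (hk : k ≤ Fintype.card n) :
    M.charpoly.coeff (Fintype.card n - k) = (-1) ^ k * (compound k M).trace := by
  rw [charpoly_coeff_eq_sum_minors M k hk, trace,
    Finset.sum_subtype (p := (· ∈ Set.powersetCard n k)) _
      (fun s => by simp [Finset.mem_powersetCard, Set.powersetCard.mem_iff])]
  exact congrArg _ (Fintype.sum_congr _ _ fun I => (det_submatrix_orderEmbOfFin M I.1 I.2).symm)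

end Matrix

/-- If `A` is a real symmetric `n × n` matrix and `0 ≤ k ≤ n`, then `(-1)^k` times the
coefficient of `x^{n-k}` in the characteristic polynomial of `A²` equals the sum of the
squares of all `k × k` minors of `A`; for `k = 0` both sides are `1`. -/
theorem coeff_charpoly_sq_eq_sum_sq_minors {n : ℕ} (A : Matrix (Fin n) (Fin n) ℝ)
    (hA : A.IsSymm) (k : ℕ) (hk : k ≤ n) :
    (-1 : ℝ) ^ k * (A ^ 2).charpoly.coeff (n - k) =
      ∑ I : {s : Finset (Fin n) // s.card = k}, ∑ J : {s : Finset (Fin n) // s.card = k},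
        (A.minorOn I J) ^ 2 := by
  have hsymm : ∀ I J, compound k A J I = compound k A I J := fun I J => by
    rw [← transpose_apply (compound k A), ← compound_transpose, hA.eq]
  have hcoeff := charpoly_coeff_eq_trace_compound (A ^ 2) (k := k) (by simpa using hk)
  rw [Fintype.card_fin] at hcoeff
  calc (-1 : ℝ) ^ k * (A ^ 2).charpoly.coeff (n - k)
      = (compound k A * compound k A).trace := by
        rw [hcoeff, ← mul_assoc, ← pow_add, Even.neg_one_pow ⟨k, rfl⟩, one_mul, pow_two,
          compound_mul]
    _ = ∑ I, ∑ J, compound k A I J ^ 2 := by simp only [trace, diag_apply, mul_apply, hsymm, sq]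
    _ = ∑ I : {s : Finset (Fin n) // s.card = k}, ∑ J : {s : Finset (Fin n) // s.card = k},
          A.minorOn I J ^ 2 :=
        -- same type as `{s // s.card = k}`, but a different `Fintype` instance
        let e : Set.powersetCard (Fin n) k ≃ {s : Finset (Fin n) // s.card = k} := .refl _
        Fintype.sum_equiv e _ _ fun _ => Fintype.sum_equiv e _ _ fun _ => rfl
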